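/- Let R be a ring, T a right R-module, E an injective cogenerator of the category of right R-modules, and let 0 → T → Q₀ →ζ→ Q₁ be an exact sequence with Q₀ and Q₁ injective. Then T is cosilting with respect to ζ if and only if the following two conditions hold: (a) T is partial cosilting with respect to ζ, and (b) there exists an exact sequence 0 → T₁ → T₀ →γ→ E of right R-modules with T₀, T₁ ∈ Prod(T), such that for every module T′ ∈ 𝓑_ζ the induced map Hom_R(T′,T₀) → Hom_R(T′,E), g ↦ γ∘g, is surjective. -/

import Mathlib

/-!
If `Cogen T = 𝓑_ζ`, let `H = Hom(E, Q₁)` and let `W` be the pullback of `ζ^H : Q₀^H → Q₁^H`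
along the evaluation map `E → Q₁^H`. Then `0 → T^H → W → E` is exact and every map from a
module of `𝓑_ζ` to `E` lifts to `W` by construction. The module `W` lies in `𝓑_ζ` because
`𝓑_ζ` contains `T^H` and is closed under this kind of extension, and `W` is a direct summand
of `T^Hom(W,T)` because the canonical embedding `W → T^Hom(W,T)` splits: `E` and `Q₀` are
injective, so the maps into them extend, and what goes wrong lands in `T^H`, where it is
corrected using the coordinate projections.

Conversely, `𝓑_ζ` is closed under submodules (`Q₁` is injective), so by closure under products
it contains `Cogen T`; and a module of `𝓑_ζ` embeds into a power of `E` whose coordinates all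
factor through `γ`, hence embeds into a power of `T₀ ∈ Prod T`.
-/

universe u v

open Function

variable (R : Type u) [Ring R]

/-- `X ∈ 𝓑_ζ`: every map `X → Q₁` factors through `ζ`. -/
def MemB {Q₀ Q₁ : Type v} [AddCommGroup Q₀] [Module R Q₀] [AddCommGroup Q₁] [Module R Q₁]
    (ζ : Q₀ →ₗ[R] Q₁) (X : Type v) [AddCommGroup X] [Module R X] : Prop :=
  Surjective fun g : X →ₗ[R] Q₀ => ζ ∘ₗ g

/-- `X ∈ Cogen T`: `X` embeds into a direct product of copies of `T`. -/
def MemCogen (T : Type v) [AddCommGroup T] [Module R T]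
    (X : Type v) [AddCommGroup X] [Module R X] : Prop :=
  ∃ (ι : Type v) (f : X →ₗ[R] (ι → T)), Injective f

/-- `X ∈ Prod T`: `X` is (isomorphic to) a direct summand of a direct product of copies
of `T`, i.e. `X` admits a split embedding into a power of `T`. -/
def MemProd (T : Type v) [AddCommGroup T] [Module R T]
    (X : Type v) [AddCommGroup X] [Module R X] : Prop :=
  ∃ (ι : Type v) (a : X →ₗ[R] (ι → T)) (b : (ι → T) →ₗ[R] X), b ∘ₗ a = LinearMap.id

variable {R}

section Extension

variable {Q X Y : Type v} [AddCommGroup Q] [Module R Q] [AddCommGroup X] [Module R X]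
  [AddCommGroup Y] [Module R Y]

theorem exists_comp_eq_of_injective [Module.Injective R Q] {i : X →ₗ[R] Y} (hi : Injective i)
    (g : X →ₗ[R] Q) : ∃ h : Y →ₗ[R] Q, h ∘ₗ i = g :=
  let ⟨h, hh⟩ := Module.Injective.out i hi g
  ⟨h, LinearMap.ext hh⟩

theorem exists_comp_eq_of_ker_le [Module.Injective R Q] (γ : X →ₗ[R] Y) {ψ : X →ₗ[R] Q}
    (hψ : LinearMap.ker γ ≤ LinearMap.ker ψ) : ∃ h : Y →ₗ[R] Q, h ∘ₗ γ = ψ := by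
  obtain ⟨h, hh⟩ := exists_comp_eq_of_injective (LinearMap.range γ).injective_subtype
    ((LinearMap.ker γ).liftQ ψ hψ ∘ₗ γ.quotKerEquivRange.symm.toLinearMap)
  refine ⟨h, LinearMap.ext fun x => ?_⟩
  simpa [LinearMap.quotKerEquivRange_symm_apply_image] using
    LinearMap.congr_fun hh ⟨γ x, LinearMap.mem_range_self γ x⟩

theorem exists_comp_eq_of_range_le {f : X →ₗ[R] Y} (hf : Injective f) {g : Q →ₗ[R] Y}
    (hg : LinearMap.range g ≤ LinearMap.range f) : ∃ d : Q →ₗ[R] X, f ∘ₗ d = g :=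
  ⟨(LinearEquiv.ofInjective f hf).symm.toLinearMap ∘ₗ g.codRestrict _ fun q => hg ⟨q, rfl⟩,
    LinearMap.ext fun _ => LinearEquiv.ofInjective_symm_apply (h := hf) f _⟩

end Extension

section MemB

variable {Q₀ Q₁ X Y : Type v} [AddCommGroup Q₀] [Module R Q₀] [AddCommGroup Q₁] [Module R Q₁]
  {ζ : Q₀ →ₗ[R] Q₁} [AddCommGroup X] [Module R X] [AddCommGroup Y] [Module R Y]

theorem MemB.of_injective [Module.Injective R Q₁] (hY : MemB R ζ Y) {i : X →ₗ[R] Y}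
    (hi : Injective i) : MemB R ζ X := by
  intro φ
  obtain ⟨Φ, rfl⟩ := exists_comp_eq_of_injective hi φ
  obtain ⟨G, rfl⟩ := hY Φ
  exact ⟨G ∘ₗ i, rfl⟩

theorem MemB.of_exact [Module.Injective R Q₀] [Module.Injective R Q₁] {K E : Type v}
    [AddCommGroup K] [Module R K] [AddCommGroup E] [Module R E] (hK : MemB R ζ K)
    {j : K →ₗ[R] X} (hj : Injective j) {γ : X →ₗ[R] E}
    (hjγ : LinearMap.ker γ ≤ LinearMap.range j)
    (hγ : ∀ h : E →ₗ[R] Q₁, ∃ g : X →ₗ[R] Q₀, ζ ∘ₗ g = h ∘ₗ γ) : MemB R ζ X := by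
  intro φ
  obtain ⟨a, ha⟩ := hK (φ ∘ₗ j)
  obtain ⟨a', rfl⟩ := exists_comp_eq_of_injective hj a
  obtain ⟨h, hh⟩ := exists_comp_eq_of_ker_le γ (ψ := φ - ζ ∘ₗ a') <| hjγ.trans <| by
    rintro _ ⟨k, rfl⟩
    simpa [sub_eq_zero] using (LinearMap.congr_fun ha k).symm
  obtain ⟨g, hg⟩ := hγ h
  exact ⟨a' + g, show ζ ∘ₗ (a' + g) = φ by rw [LinearMap.comp_add, hg, hh, add_sub_cancel]⟩

end MemB

section MemCogen

variable {T X Y : Type v} [AddCommGroup T] [Module R T] [AddCommGroup X] [Module R X]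
  [AddCommGroup Y] [Module R Y]

theorem memCogen_pi_self (ι : Type v) : MemCogen R T (ι → T) :=
  ⟨ι, LinearMap.id, injective_id⟩

theorem memCogen_self : MemCogen R T T :=
  ⟨PUnit, LinearMap.pi fun _ => LinearMap.id, fun _ _ h => congrFun h PUnit.unit⟩

theorem MemCogen.of_injective (hY : MemCogen R T Y) {i : X →ₗ[R] Y} (hi : Injective i) :
    MemCogen R T X :=
  let ⟨ι, e, he⟩ := hY
  ⟨ι, e ∘ₗ i, he.comp hi⟩

theorem MemCogen.pi {ι : Type v} {N : ι → Type v} [∀ i, AddCommGroup (N i)]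
    [∀ i, Module R (N i)] (hN : ∀ i, MemCogen R T (N i)) : MemCogen R T (∀ i, N i) := by
  choose κ e he using hN
  refine ⟨Σ i, κ i, LinearMap.pi fun s => LinearMap.proj s.2 ∘ₗ e s.1 ∘ₗ LinearMap.proj s.1, ?_⟩
  intro a b hab
  funext i
  exact he i (funext fun k => congrFun hab ⟨i, k⟩)

theorem MemProd.memCogen (hX : MemProd R T X) : MemCogen R T X :=
  let ⟨ι, a, b, hab⟩ := hX
  ⟨ι, a, LeftInverse.injective (g := b) (LinearMap.congr_fun hab)⟩

theorem MemCogen.of_forall_exists_comp_eq {E T₀ : Type v} [AddCommGroup E] [Module R E]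
    [AddCommGroup T₀] [Module R T₀] (hX : MemCogen R E X) (hT₀ : MemCogen R T T₀)
    {γ : T₀ →ₗ[R] E} (hγ : ∀ ψ : X →ₗ[R] E, ∃ g : X →ₗ[R] T₀, γ ∘ₗ g = ψ) :
    MemCogen R T X := by
  obtain ⟨κ, u, hu⟩ := hX
  choose g hg using fun k => hγ (LinearMap.proj k ∘ₗ u)
  refine (MemCogen.pi fun _ : κ => hT₀).of_injective (i := LinearMap.pi g) fun x y hxy => hu ?_
  funext k
  calc u x k = γ (g k x) := (LinearMap.congr_fun (hg k) x).symm
    _ = γ (g k y) := congrArg γ (congrFun hxy k)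
    _ = u y k := LinearMap.congr_fun (hg k) y

end MemCogen

section EvalPullback

variable {Q₀ Q₁ T : Type v} [AddCommGroup Q₀] [Module R Q₀] [AddCommGroup Q₁] [Module R Q₁]
  [AddCommGroup T] [Module R T] (ζ : Q₀ →ₗ[R] Q₁) (E : Type v) [AddCommGroup E] [Module R E]
  {f : T →ₗ[R] Q₀}

def evalPullback : Submodule R (E × ((E →ₗ[R] Q₁) → Q₀)) where
  carrier := {p | ∀ h : E →ₗ[R] Q₁, h p.1 = ζ (p.2 h)}
  add_mem' ha hb h := by simp [ha h, hb h]
  zero_mem' h := by simp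
  smul_mem' c _ ha h := by simp [ha h]

namespace evalPullback

def fst : evalPullback ζ E →ₗ[R] E :=
  LinearMap.fst R E _ ∘ₗ (evalPullback ζ E).subtype

def snd : evalPullback ζ E →ₗ[R] ((E →ₗ[R] Q₁) → Q₀) :=
  LinearMap.snd R E _ ∘ₗ (evalPullback ζ E).subtype

variable {ζ E}

theorem comp_fst (h : E →ₗ[R] Q₁) : h ∘ₗ fst ζ E = ζ ∘ₗ LinearMap.proj h ∘ₗ snd ζ E :=
  LinearMap.ext fun w => w.2 h

theorem exists_fst_comp_eq {X : Type v} [AddCommGroup X] [Module R X] (hX : MemB R ζ X)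
    (ψ : X →ₗ[R] E) : ∃ g : X →ₗ[R] evalPullback ζ E, fst ζ E ∘ₗ g = ψ := by
  choose L hL using fun h : E →ₗ[R] Q₁ => hX (h ∘ₗ ψ)
  exact ⟨LinearMap.codRestrict _ (ψ.prod (LinearMap.pi L))
    fun x h => (LinearMap.congr_fun (hL h) x).symm, rfl⟩

variable (ζ E)

def inclPow (hζf : ζ ∘ₗ f = 0) : ((E →ₗ[R] Q₁) → T) →ₗ[R] evalPullback ζ E :=
  LinearMap.codRestrict _ (LinearMap.prod 0 (LinearMap.pi fun h => f ∘ₗ LinearMap.proj h))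
    fun t h => by simpa using (LinearMap.congr_fun hζf (t h)).symm

variable {ζ E}

theorem inclPow_injective (hf : Injective f) (hζf : ζ ∘ₗ f = 0) :
    Injective (inclPow ζ E hζf) :=
  fun _ _ hst => funext fun h => hf (congrFun (congrArg (fun w => w.1.2) hst) h)

theorem range_inclPow (hζf : ζ ∘ₗ f = 0) (hfζ : LinearMap.ker ζ ≤ LinearMap.range f) :
    LinearMap.range (inclPow ζ E hζf) = LinearMap.ker (fst ζ E) := by
  refine le_antisymm (by rintro _ ⟨t, rfl⟩; rfl) fun w hw => ?_
  replace hw : w.1.1 = 0 := hw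
  have hker (h : E →ₗ[R] Q₁) : w.1.2 h ∈ LinearMap.ker ζ := by
    simpa [hw] using (w.2 h).symm
  choose t ht using fun h => hfζ (hker h)
  exact ⟨t, Subtype.ext (Prod.ext hw.symm (funext ht))⟩

theorem memB [Module.Injective R Q₀] [Module.Injective R Q₁] (hf : Injective f)
    (hζf : ζ ∘ₗ f = 0) (hfζ : LinearMap.ker ζ ≤ LinearMap.range f)
    (hpow : MemB R ζ ((E →ₗ[R] Q₁) → T)) : MemB R ζ (evalPullback ζ E) :=
  hpow.of_exact (inclPow_injective hf hζf) (range_inclPow hζf hfζ).ge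
    fun h => ⟨_, (comp_fst h).symm⟩

theorem exists_comp_eq_add_inclPow [Module.Injective R E] [Module.Injective R Q₀]
    (hf : Injective f) (hζf : ζ ∘ₗ f = 0) (hfζ : LinearMap.ker ζ ≤ LinearMap.range f)
    {X Y : Type v} [AddCommGroup X] [Module R X] [AddCommGroup Y] [Module R Y]
    {i : X →ₗ[R] Y} (hi : Injective i) (hY : MemB R ζ Y) (u : X →ₗ[R] evalPullback ζ E) :
    ∃ (v : Y →ₗ[R] evalPullback ζ E) (d : X →ₗ[R] ((E →ₗ[R] Q₁) → T)),
      v ∘ₗ i = u + inclPow ζ E hζf ∘ₗ d := by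
  obtain ⟨e, he⟩ := exists_comp_eq_of_injective hi (fst ζ E ∘ₗ u)
  choose p hp using fun h : E →ₗ[R] Q₁ =>
    exists_comp_eq_of_injective hi (LinearMap.proj h ∘ₗ snd ζ E ∘ₗ u)
  choose c hc using fun h : E →ₗ[R] Q₁ => hY (h ∘ₗ e - ζ ∘ₗ p h)
  beta_reduce at hc
  have hci (h : E →ₗ[R] Q₁) : ζ ∘ₗ c h ∘ₗ i = 0 := by
    rw [← LinearMap.comp_assoc, hc, LinearMap.sub_comp, LinearMap.comp_assoc, he,
      LinearMap.comp_assoc, hp, ← LinearMap.comp_assoc, comp_fst]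
    simp only [LinearMap.comp_assoc, sub_self]
  choose d hd using fun h =>
    exists_comp_eq_of_range_le hf ((LinearMap.range_le_ker_iff.mpr (hci h)).trans hfζ)
  refine ⟨LinearMap.codRestrict _ (e.prod (LinearMap.pi fun h => p h + c h)) fun y h => ?_,
    LinearMap.pi d, ?_⟩
  · have hcy : ζ (c h y) = h (e y) - ζ (p h y) := LinearMap.congr_fun (hc h) y
    show h (e y) = ζ (p h y + c h y)
    rw [map_add, hcy, add_sub_cancel]
  · refine LinearMap.ext fun x => Subtype.ext (Prod.ext ?_ (funext fun h => ?_))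
    · exact (LinearMap.congr_fun he x).trans (add_zero _).symm
    · exact congrArg₂ (· + ·) (LinearMap.congr_fun (hp h) x) (LinearMap.congr_fun (hd h) x).symm

theorem memProd [Module.Injective R E] [Module.Injective R Q₀] (hf : Injective f)
    (hζf : ζ ∘ₗ f = 0) (hfζ : LinearMap.ker ζ ≤ LinearMap.range f)
    (hW : MemCogen R T (evalPullback ζ E)) (hpow : ∀ ι : Type v, MemB R ζ (ι → T)) :
    MemProd R T (evalPullback ζ E) := by
  let ev : evalPullback ζ E →ₗ[R] ((evalPullback ζ E →ₗ[R] T) → T) := LinearMap.pi fun ψ => ψ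
  have hev : Injective ev := by
    obtain ⟨ι, e, he⟩ := hW
    exact fun a b hab => he <| funext fun k =>
      congrFun hab ((LinearMap.proj k : (ι → T) →ₗ[R] T) ∘ₗ e)
  obtain ⟨v, d, hvd⟩ := exists_comp_eq_add_inclPow hf hζf hfζ hev (hpow _) LinearMap.id
  let D : ((evalPullback ζ E →ₗ[R] T) → T) →ₗ[R] ((E →ₗ[R] Q₁) → T) :=
    LinearMap.pi fun h => LinearMap.proj (LinearMap.proj h ∘ₗ d)
  have hD : D ∘ₗ ev = d := rfl
  refine ⟨_, ev, v - inclPow ζ E hζf ∘ₗ D, ?_⟩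
  rw [LinearMap.sub_comp, hvd, LinearMap.comp_assoc, hD]
  abel

end evalPullback

end EvalPullback

/-- Main characterization of cosilting modules: given an injective cogenerator `E` and an
injective copresentation `0 → T → Q₀ →ζ→ Q₁`, the module `T` is cosilting with respect to `ζ`
iff (a) `T` is partial cosilting with respect to `ζ`, and (b) there is an exact sequence
`0 → T₁ → T₀ →γ→ E` with `T₀, T₁ ∈ Prod T` such that `Hom(T', γ)` is epic for all
`T' ∈ 𝓑_ζ`. -/
theorem stmt_12
    (E : Type v) [AddCommGroup E] [Module R E] [Module.Injective R E]
    (hcog : ∀ (N : Type v) [AddCommGroup N] [Module R N],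
      ∃ (ι : Type v) (f : N →ₗ[R] (ι → E)), Injective f)
    {Q₀ Q₁ : Type v} [AddCommGroup Q₀] [Module R Q₀] [AddCommGroup Q₁] [Module R Q₁]
    (ζ : Q₀ →ₗ[R] Q₁) [Module.Injective R Q₀] [Module.Injective R Q₁]
    (T : Type v) [AddCommGroup T] [Module R T]
    (f : T →ₗ[R] Q₀) (hf : Injective f) (hex : LinearMap.range f = LinearMap.ker ζ) :
    (∀ (X : Type v) [AddCommGroup X] [Module R X], MemCogen R T X ↔ MemB R ζ X) ↔
    ((MemB R ζ T ∧
       ∀ (ι : Type v) (N : ι → Type v) [∀ i, AddCommGroup (N i)] [∀ i, Module R (N i)],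
         (∀ i, MemB R ζ (N i)) → MemB R ζ (∀ i, N i)) ∧
     ∃ (T₁ T₀ : Type v) (_ : AddCommGroup T₁) (_ : Module R T₁)
       (_ : AddCommGroup T₀) (_ : Module R T₀),
       MemProd R T T₁ ∧ MemProd R T T₀ ∧
       ∃ (j : T₁ →ₗ[R] T₀) (γ : T₀ →ₗ[R] E),
         Injective j ∧ LinearMap.range j = LinearMap.ker γ ∧
         ∀ (T' : Type v) [AddCommGroup T'] [Module R T'], MemB R ζ T' →
           Surjective fun g : T' →ₗ[R] T₀ => γ ∘ₗ g) := by
  have hζf : ζ ∘ₗ f = 0 := LinearMap.range_le_ker_iff.mp hex.le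
  constructor
  · intro hcos
    have hpow (ι : Type v) : MemB R ζ (ι → T) := (hcos _).mp (memCogen_pi_self ι)
    have hW : MemB R ζ (evalPullback ζ E) := evalPullback.memB hf hζf hex.ge (hpow _)
    refine ⟨⟨(hcos T).mp memCogen_self, fun ι N _ _ hN =>
        (hcos _).mp (MemCogen.pi fun i => (hcos _).mpr (hN i))⟩,
      _, evalPullback ζ E, _, _, _, _, ⟨_, LinearMap.id, LinearMap.id, rfl⟩,
      evalPullback.memProd hf hζf hex.ge ((hcos _).mpr hW) hpow,
      evalPullback.inclPow ζ E hζf, evalPullback.fst ζ E, evalPullback.inclPow_injective hf hζf,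
      evalPullback.range_inclPow hζf hex.ge, fun T' _ _ => evalPullback.exists_fst_comp_eq⟩
  · rintro ⟨⟨hTB, hprod⟩, T₁, T₀, _, _, _, _, -, hT₀, -, γ, -, -, hγ⟩ X _ _
    exact ⟨fun ⟨ι, e, he⟩ => (hprod ι _ fun _ => hTB).of_injective he,
      fun hX => MemCogen.of_forall_exists_comp_eq (hcog X) hT₀.memCogen (hγ X hX)⟩
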